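/- Let w be a nonempty finite word over an alphabet A. Then there is at most one letter b ∈ A such that the word wb (w followed by the letter b) is closed; that is, if b, c ∈ A are letters with b ≠ c, then wb and wc cannot both be closed. -/
import Mathlib


/-- `w` occurs in the infinite word `x` at position `m`. -/
def OccursAt {A : Type*} (x : ℕ → A) (w : List A) (m : ℕ) : Prop :=
  w = (List.range w.length).map fun i => x (m + i)

/-- `w` is a factor of the infinite word `x`. -/
def IsFactorOf {A : Type*} (x : ℕ → A) (w : List A) : Prop :=
  ∃ m, OccursAt x w m

/-- `w` is a recurrent factor of `x` : it occurs at infinitely many positions. -/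
def IsRecurrentFactor {A : Type*} (x : ℕ → A) (w : List A) : Prop :=
  ∀ N, ∃ m, N ≤ m ∧ OccursAt x w m

/-- The set of positions at which `u` occurs inside the finite word `w`. -/
def occSet {A : Type*} (u w : List A) : Set ℕ := {i | u <+: w.drop i}

/-- `u` is a border of `w`: nonempty, strictly shorter than `w`,
and both a prefix and a suffix of `w`. -/
def IsBorder {A : Type*} (u w : List A) : Prop :=
  0 < u.length ∧ u.length < w.length ∧ u <+: w ∧ u <:+ w

/-- A finite word is closed if it is a single letter or it has a border
occurring exactly twice in it. -/
def IsClosedWord {A : Type*} (w : List A) : Prop :=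
  w.length = 1 ∨ ∃ u, IsBorder u w ∧ (occSet u w).ncard = 2

/-- A nonempty finite word is open if it is not closed. -/
def IsOpenWord {A : Type*} (w : List A) : Prop :=
  w ≠ [] ∧ ¬ IsClosedWord w

/-- The frontier of a closed word is its longest border. -/
def IsFrontier {A : Type*} (u w : List A) : Prop :=
  IsBorder u w ∧ ∀ v, IsBorder v w → v.length ≤ u.length

/-- number of closed factors of `x` of length `n`. -/
noncomputable def clComp {A : Type*} (x : ℕ → A) (n : ℕ) : ℕ :=
  {w : List A | w.length = n ∧ IsFactorOf x w ∧ IsClosedWord w}.ncard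

/-- number of open factors of `x` of length `n`. -/
noncomputable def opComp {A : Type*} (x : ℕ → A) (n : ℕ) : ℕ :=
  {w : List A | w.length = n ∧ IsFactorOf x w ∧ IsOpenWord w}.ncard

/-- `x` is ultimately periodic: `x = u v v v ⋯` for some `u`, `v` with `v` nonempty,
expressed via: every finite word `u v^n` is a prefix of `x`. -/
def UltPeriodic {A : Type*} (x : ℕ → A) : Prop :=
  ∃ u v : List A, v ≠ [] ∧ ∀ n : ℕ, OccursAt x (u ++ (List.replicate n v).flatten) 0

/-- `S ⊆ ℕ` is syndetic with gaps smaller than `d`: `S ∩ [n, n+d] ≠ ∅` for all `n`. -/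
def SyndeticWithGaps (S : Set ℕ) (d : ℕ) : Prop :=
  ∀ n : ℕ, ∃ m ∈ S, n ≤ m ∧ m ≤ n + d

/-- `S ⊆ ℕ` is syndetic. -/
def Syndetic (S : Set ℕ) : Prop :=
  ∃ d : ℕ, SyndeticWithGaps S d

lemma occSet_finite {A : Type*} (u w : List A) (hu : u ≠ []) : (occSet u w).Finite := by
  apply Set.Finite.subset (Set.finite_Iio w.length)
  intro i hi
  simp only [occSet, Set.mem_setOf_eq] at hi
  by_contra h
  simp only [Set.mem_Iio, not_lt] at h
  have : w.drop i = [] := List.drop_eq_nil_of_le h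
  rw [this, List.prefix_nil] at hi
  exact hu hi

lemma key {A : Type*} (w : List A) (b c : A) (u v : List A)
    (hu : IsBorder u (w ++ [b]) ∧ (occSet u (w ++ [b])).ncard = 2)
    (hv : IsBorder v (w ++ [c]))
    (hle : u.length ≤ v.length) : b = c := by
  obtain ⟨⟨hu0, hulen, hupre, husuf⟩, hcard⟩ := hu
  obtain ⟨hv0, hvlen, hvpre, hvsuf⟩ := hv
  simp only [List.length_append, List.length_singleton] at hulen hvlen
  have hune : u ≠ [] := by intro h; simp [h] at hu0
  -- u is a prefix of w, v is a prefix of w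
  have hupw : u <+: w := by
    rw [List.prefix_iff_eq_take] at hupre ⊢
    rwa [List.take_append_of_le_length (by omega)] at hupre
  have hvpw : v <+: w := by
    rw [List.prefix_iff_eq_take] at hvpre ⊢
    rwa [List.take_append_of_le_length (by omega)] at hvpre
  rcases eq_or_lt_of_le hle with heq | hlt
  · -- u = v, so last letters agree
    have huv : u = v := by
      rw [List.prefix_iff_eq_take] at hupw hvpw
      rw [hupw, hvpw, heq]
    have hb : (w ++ [b]).getLast? = some b := by
      simp [List.getLast?_append]
    have hc : (w ++ [c]).getLast? = some c := by
      simp [List.getLast?_append]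
    obtain ⟨t1, ht1⟩ := husuf
    obtain ⟨t2, ht2⟩ := hvsuf
    have e1 : u.getLast? = some b := by
      rw [← ht1] at hb
      rwa [List.getLast?_append_of_ne_nil _ hune] at hb
    have e2 : v.getLast? = some c := by
      rw [← ht2] at hc
      have hvne : v ≠ [] := by intro h; simp [h] at hv0
      rwa [List.getLast?_append_of_ne_nil _ hvne] at hc
    rw [huv, e2] at e1
    exact (Option.some_inj.mp e1).symm
  · -- |u| < |v|: third occurrence of u in w ++ [b], contradiction
    exfalso
    set p := w.length + 1 - v.length with hp
    set q := w.length + 1 - u.length with hq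
    -- occurrence at 0
    have h0 : 0 ∈ occSet u (w ++ [b]) := by
      simpa [occSet] using hupre
    -- occurrence at q (suffix)
    have hqocc : q ∈ occSet u (w ++ [b]) := by
      obtain ⟨t, ht⟩ := husuf
      have htl : t.length = q := by
        have := congrArg List.length ht
        simp at this; omega
      simp only [occSet, Set.mem_setOf_eq, ← ht, ← htl, List.drop_left]
      exact List.prefix_rfl
    -- occurrence at p: u <+: v, v = (w++[c]).drop p, and p + |u| ≤ |w|
    have hpocc : p ∈ occSet u (w ++ [b]) := by
      have huvp : u <+: v := List.prefix_of_prefix_length_le hupw hvpw hle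
      obtain ⟨t2, ht2⟩ := hvsuf
      have ht2l : t2.length = p := by
        have := congrArg List.length ht2
        simp at this; omega
      have hdropc : (w ++ [c]).drop p = v := by
        rw [← ht2, ← ht2l, List.drop_left]
      have hdw : u <+: w.drop p := by
        have h1 : u <+: (w ++ [c]).drop p := hdropc ▸ huvp
        rw [List.drop_append_of_le_length (by omega)] at h1
        rw [List.prefix_iff_eq_take] at h1 ⊢
        rw [List.take_append_of_le_length (by simp; omega)] at h1
        exact h1
      simp only [occSet, Set.mem_setOf_eq]
      rw [List.drop_append_of_le_length (by omega)]
      exact hdw.trans (List.prefix_append _ _)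
    have hp1 : 1 ≤ p := by omega
    have hpq : p < q := by omega
    have hsub : ({0, p, q} : Set ℕ) ⊆ occSet u (w ++ [b]) := by
      intro i hi
      rcases hi with rfl | rfl | rfl
      · exact h0
      · exact hpocc
      · exact hqocc
    have h3 : ({0, p, q} : Set ℕ).ncard = 3 := by
      rw [Set.ncard_eq_three]
      exact ⟨0, p, q, by omega, by omega, by omega, rfl⟩
    have := Set.ncard_le_ncard hsub (occSet_finite u (w ++ [b]) hune)
    omega

/-- Given a nonempty finite word `w`, at most one right extension `w ++ [b]`
of `w` by a letter is closed. -/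
theorem at_most_one_closed_right_extension
    {A : Type*} (w : List A) (hw : w ≠ []) (b c : A) (hbc : b ≠ c) :
    ¬ (IsClosedWord (w ++ [b]) ∧ IsClosedWord (w ++ [c])) := by
  rintro ⟨hb, hc⟩
  have hwlen : 1 ≤ w.length := List.length_pos_iff.mpr hw
  have hb' : ∃ u, IsBorder u (w ++ [b]) ∧ (occSet u (w ++ [b])).ncard = 2 := by
    rcases hb with h | h
    · exfalso; rw [List.length_append, List.length_singleton] at h; omega
    · exact h
  have hc' : ∃ v, IsBorder v (w ++ [c]) ∧ (occSet v (w ++ [c])).ncard = 2 := by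
    rcases hc with h | h
    · exfalso; rw [List.length_append, List.length_singleton] at h; omega
    · exact h
  obtain ⟨u, hu⟩ := hb'
  obtain ⟨v, hv⟩ := hc'
  rcases le_total u.length v.length with h | h
  · exact hbc (key w b c u v hu hv.1 h)
  · exact hbc (key w c b v u hv hu.1 h).symm
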